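/- arXiv:1904.10748 — 4 statements merged into one kernel-verified Lean document; each statement's English description precedes it below -/
import Mathlib

section
/- Let m ≥ 2, k ≥ m, and p ∈ ℝ^m with 0 ≤ p_i ≤ 1 for all i and ∑_i p_i ≤ 1. Then (2k/(k+1)) ∑_{i=1}^m p_i (1 - ∑_{j<i} p_j) - ∑_{i=1}^m p_i ≥ 0. -/
open Finset

lemma range_ident (q : ℕ → ℝ) (n : ℕ) :
    2 * ∑ i ∈ Finset.range n, q i * ∑ j ∈ Finset.range i, q j
      = (∑ i ∈ Finset.range n, q i) ^ 2 - ∑ i ∈ Finset.range n, q i ^ 2 := by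
  induction n with
  | zero => simp
  | succ n ih =>
    rw [Finset.sum_range_succ, Finset.sum_range_succ, Finset.sum_range_succ (fun i => q i ^ 2)]
    ring_nf
    ring_nf at ih
    linarith

lemma filter_lt_eq (m : ℕ) (p : Fin m → ℝ) (q : ℕ → ℝ)
    (hq : ∀ (j : ℕ) (h : j < m), q j = p ⟨j, h⟩) (i : Fin m) :
    ∑ j ∈ Finset.univ.filter (fun j => j < i), p j = ∑ j ∈ Finset.range i.val, q j := by
  refine Finset.sum_bij' (fun (j : Fin m) _ => j.val)
    (fun j hj => (⟨j, lt_trans (Finset.mem_range.mp hj) i.isLt⟩ : Fin m)) ?_ ?_ ?_ ?_ ?_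
  · intro a ha
    simp only [Finset.mem_filter, Finset.mem_univ, true_and, Fin.lt_def] at ha
    exact Finset.mem_range.mpr ha
  · intro a ha
    simp only [Finset.mem_filter, Finset.mem_univ, true_and, Fin.lt_def]
    exact Finset.mem_range.mp ha
  · intro a ha; simp
  · intro a ha; simp
  · intro a ha
    simp [hq a.val a.isLt]

/-- For m ≥ 2, k ≥ m, 0 ≤ p ≤ 1 with ∑ p ≤ 1,
    (2k/(k+1)) ∑_i p_i (1 - ∑_{j<i} p_j) - ∑_i p_i ≥ 0. -/
theorem stmt_1 (m k : ℕ) (hm : 2 ≤ m) (hk : m ≤ k) (p : Fin m → ℝ)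
    (hp0 : ∀ i, 0 ≤ p i) (hp1 : ∀ i, p i ≤ 1) (hs : ∑ i, p i ≤ 1) :
    0 ≤ (2 * (k : ℝ) / ((k : ℝ) + 1)) *
        (∑ i, p i * (1 - ∑ j ∈ Finset.univ.filter (fun j => j < i), p j))
      - ∑ i, p i := by
  classical
  set q : ℕ → ℝ := fun n => if h : n < m then p ⟨n, h⟩ else 0 with hqdef
  have hq : ∀ (j : ℕ) (h : j < m), q j = p ⟨j, h⟩ := fun j h => by simp [hqdef, h]
  set S : ℝ := ∑ i, p i with hS
  set Q : ℝ := ∑ i, p i * ∑ j ∈ Finset.univ.filter (fun j => j < i), p j with hQ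
  -- rewrite sums over Fin as sums over range
  have hSr : S = ∑ i ∈ Finset.range m, q i := by
    rw [hS, ← Fin.sum_univ_eq_sum_range]
    exact Finset.sum_congr rfl fun i _ => by rw [hq i.val i.isLt]
  have hS2r : ∑ i, (p i) ^ 2 = ∑ i ∈ Finset.range m, (q i) ^ 2 := by
    rw [← Fin.sum_univ_eq_sum_range]
    exact Finset.sum_congr rfl fun i _ => by rw [hq i.val i.isLt]
  have hQr : Q = ∑ i ∈ Finset.range m, q i * ∑ j ∈ Finset.range i, q j := by
    rw [hQ, ← Fin.sum_univ_eq_sum_range (fun n => q n * ∑ j ∈ Finset.range n, q j)]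
    refine Finset.sum_congr rfl fun i _ => ?_
    rw [hq i.val i.isLt, filter_lt_eq m p q hq i]
  have hident : 2 * Q = S ^ 2 - ∑ i, (p i) ^ 2 := by
    rw [hQr, hSr, hS2r]; exact range_ident q m
  -- Cauchy-Schwarz
  have hCS : S ^ 2 ≤ (m : ℝ) * ∑ i, (p i) ^ 2 := by
    have := sq_sum_le_card_mul_sum_sq (s := (Finset.univ : Finset (Fin m))) (f := p)
    simpa using this
  have hm0 : (0 : ℝ) < m := by positivity
  have hS0 : 0 ≤ S := Finset.sum_nonneg fun i _ => hp0 i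
  have hk0 : (0 : ℝ) < k := by
    have : (2 : ℝ) ≤ k := by exact_mod_cast le_trans hm hk
    linarith
  have hmk : (m : ℝ) ≤ k := by exact_mod_cast hk
  -- Q ≤ S^2 * (m-1)/(2m)
  have hQle : Q ≤ S * ((k : ℝ) - 1) / (2 * k) := by
    have h1 : 2 * Q ≤ S ^ 2 - S ^ 2 / m := by
      rw [hident]
      have : S ^ 2 / m ≤ ∑ i, (p i) ^ 2 := by
        rw [div_le_iff₀ hm0]; linarith [hCS]
      linarith
    have h2 : S ^ 2 - S ^ 2 / m = S ^ 2 * ((m : ℝ) - 1) / m := by field_simp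
    have hm1 : (1 : ℝ) ≤ (m : ℝ) := by exact_mod_cast le_trans one_le_two hm
    have hS2 : S ^ 2 ≤ S := by nlinarith
    have h3 : S ^ 2 * ((m : ℝ) - 1) / m ≤ S * ((m : ℝ) - 1) / m := by
      gcongr <;> linarith
    have h4 : S * ((m : ℝ) - 1) / m ≤ S * ((k : ℝ) - 1) / k := by
      rw [div_le_div_iff₀ hm0 hk0]
      nlinarith
    have : 2 * Q ≤ 2 * (S * ((k : ℝ) - 1) / (2 * k)) := by
      have : 2 * (S * ((k : ℝ) - 1) / (2 * k)) = S * ((k : ℝ) - 1) / k := by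
        field_simp
      rw [this]
      calc 2 * Q ≤ S ^ 2 - S ^ 2 / m := h1
        _ = S ^ 2 * ((m : ℝ) - 1) / m := h2
        _ ≤ S * ((m : ℝ) - 1) / m := h3
        _ ≤ S * ((k : ℝ) - 1) / k := h4
    linarith
  -- conclude
  have hsum : (∑ i, p i * (1 - ∑ j ∈ Finset.univ.filter (fun j => j < i), p j)) = S - Q := by
    rw [hS, hQ, ← Finset.sum_sub_distrib]
    exact Finset.sum_congr rfl fun i _ => by ring
  rw [hsum]
  have hkey : S - Q ≥ S * ((k : ℝ) + 1) / (2 * k) := by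
    have : S - S * ((k : ℝ) - 1) / (2 * k) = S * ((k : ℝ) + 1) / (2 * k) := by
      field_simp; ring
    linarith [hQle]
  have h2k : (0 : ℝ) < 2 * k := by linarith
  have hk1 : (0 : ℝ) < (k : ℝ) + 1 := by linarith
  have : (2 * (k : ℝ) / ((k : ℝ) + 1)) * (S - Q)
      ≥ (2 * (k : ℝ) / ((k : ℝ) + 1)) * (S * ((k : ℝ) + 1) / (2 * k)) := by
    apply mul_le_mul_of_nonneg_left hkey
    positivity
  have heq : (2 * (k : ℝ) / ((k : ℝ) + 1)) * (S * ((k : ℝ) + 1) / (2 * k)) = S := by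
    field_simp
  linarith
end

section
/- Let f : 2^V → ℝ≥0 be a monotone set function with f(∅) = 0, and define the submodularity ratio γ_{U,k}(f) = min over L ⊆ U and S with |S| ≤ k of (∑_{v∈S} f(L∪{v}) - f(L)) / (f(L∪S) - f(L)) (with 0/0 = 1). Then f is submodular if and only if γ_{U,k}(f) = 1 for every U ⊆ V and every k ≥ 1. -/
/-!
Both sides are equivalent to the inequality `f (L ∪ S) - f L ≤ ∑ v ∈ S, (f (insert v L) - f L)`
for all `L` and `S`. For a monotone `f` this inequality says exactly `1 ≤ subRatio f L S`, and
`subRatio f ∅ ∅ = 1`, so it is the statement `γ_{U,k}(f) = 1`. Submodularity gives it by adding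
the elements of `S` one at a time. Conversely, for `S = {u, v}` it is the exchange inequality
`f(v | A ∪ {u}) ≤ f(v | A)`, and adding the elements of `B \ A` one at a time turns this into
`f(v | B) ≤ f(v | A)`.
-/

open Finset

variable {V : Type*} [DecidableEq V] [Fintype V]

/-- The ratio (∑_{v∈S} f(v|L)) / f(S|L), with the convention 0/0 = 1
    (for monotone f, f(S|L) = 0 forces all numerator terms to be 0). -/
noncomputable def subRatio (f : Finset V → ℝ) (L S : Finset V) : ℝ :=
  if f (L ∪ S) - f L = 0 then 1
  else (∑ v ∈ S, (f (insert v L) - f L)) / (f (L ∪ S) - f L)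

/-- Submodularity ratio γ_{U,k}(f): the minimum of `subRatio` over L ⊆ U and |S| ≤ k. -/
noncomputable def submodularityRatio (f : Finset V → ℝ) (U : Finset V) (k : ℕ) : ℝ :=
  sInf {r : ℝ | ∃ L S : Finset V, L ⊆ U ∧ S.card ≤ k ∧ r = subRatio f L S}

section

variable {α : Type*} [DecidableEq α] {f : Finset α → ℝ}

lemma sub_le_sum_marginal_of_submodular
    (hsub : ∀ A B : Finset α, A ⊆ B → ∀ v ∉ B, f (insert v B) - f B ≤ f (insert v A) - f A)
    (L S : Finset α) : f (L ∪ S) - f L ≤ ∑ v ∈ S, (f (insert v L) - f L) := by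
  induction S using Finset.induction with
  | empty => simp
  | @insert a S haS ih =>
    rw [sum_insert haS, union_insert]
    by_cases haL : a ∈ L ∪ S
    · have haL' : a ∈ L := (mem_union.mp haL).resolve_right haS
      rw [insert_eq_of_mem haL, insert_eq_of_mem haL']
      linarith
    · linarith [hsub L (L ∪ S) subset_union_left a haL]

lemma sum_marginal_nonneg (hmono : ∀ A B : Finset α, A ⊆ B → f A ≤ f B) (L S : Finset α) :
    0 ≤ ∑ v ∈ S, (f (insert v L) - f L) :=
  sum_nonneg fun v _ ↦ sub_nonneg.mpr (hmono _ _ (subset_insert v L))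

lemma one_le_subRatio_iff [Fintype α] (hmono : ∀ A B : Finset α, A ⊆ B → f A ≤ f B)
    (L S : Finset α) :
    1 ≤ subRatio f L S ↔ f (L ∪ S) - f L ≤ ∑ v ∈ S, (f (insert v L) - f L) := by
  unfold subRatio
  split_ifs with hgap
  · simpa [hgap] using sum_marginal_nonneg hmono L S
  · have hpos : 0 < f (L ∪ S) - f L :=
      lt_of_le_of_ne (sub_nonneg.mpr (hmono _ _ subset_union_left)) (Ne.symm hgap)
    rw [one_le_div₀ hpos]

lemma subRatio_nonneg [Fintype α] (hmono : ∀ A B : Finset α, A ⊆ B → f A ≤ f B)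
    (L S : Finset α) :
    0 ≤ subRatio f L S := by
  unfold subRatio
  split_ifs
  · exact zero_le_one
  · exact div_nonneg (sum_marginal_nonneg hmono L S)
      (sub_nonneg.mpr (hmono _ _ subset_union_left))

lemma submodularityRatio_eq_one_iff [Fintype α] (hmono : ∀ A B : Finset α, A ⊆ B → f A ≤ f B)
    (U : Finset α) (k : ℕ) :
    submodularityRatio f U k = 1 ↔
      ∀ L ⊆ U, ∀ S : Finset α, S.card ≤ k →
        f (L ∪ S) - f L ≤ ∑ v ∈ S, (f (insert v L) - f L) := by
  set R := {r : ℝ | ∃ L S : Finset α, L ⊆ U ∧ S.card ≤ k ∧ r = subRatio f L S}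
  have hone : (1 : ℝ) ∈ R := ⟨∅, ∅, empty_subset U, by simp, by simp [subRatio]⟩
  have hbdd : BddBelow R := ⟨0, by rintro r ⟨L, S, -, -, rfl⟩; exact subRatio_nonneg hmono L S⟩
  constructor
  · intro hγ L hLU S hS
    rw [← one_le_subRatio_iff hmono, ← hγ]
    exact csInf_le hbdd ⟨L, S, hLU, hS, rfl⟩
  · intro hsum
    refine IsLeast.csInf_eq ⟨hone, ?_⟩
    rintro r ⟨L, S, hLU, hS, rfl⟩
    exact (one_le_subRatio_iff hmono L S).mpr (hsum L hLU S hS)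

lemma marginal_insert_le_of_sub_le_sum
    (hsum : ∀ L S : Finset α, f (L ∪ S) - f L ≤ ∑ v ∈ S, (f (insert v L) - f L))
    (A : Finset α) {u v : α} (huv : u ≠ v) :
    f (insert v (insert u A)) - f (insert u A) ≤ f (insert v A) - f A := by
  have hpair := hsum A {u, v}
  rw [sum_pair huv, union_insert, union_singleton, insert_comm] at hpair
  linarith

lemma submodular_of_marginal_insert_le
    (hexch : ∀ (A : Finset α) (u v : α), u ≠ v →
      f (insert v (insert u A)) - f (insert u A) ≤ f (insert v A) - f A)
    (A B : Finset α) (hAB : A ⊆ B) (v : α) (hvB : v ∉ B) :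
    f (insert v B) - f B ≤ f (insert v A) - f A := by
  suffices key : ∀ C : Finset α, v ∉ A ∪ C →
      f (insert v (A ∪ C)) - f (A ∪ C) ≤ f (insert v A) - f A by
    rw [← union_eq_right.mpr hAB] at hvB ⊢
    exact key B hvB
  intro C
  induction C using Finset.induction with
  | empty => simp
  | @insert u C _ ih =>
    intro hv
    rw [union_insert] at hv ⊢
    have hvC : v ∉ A ∪ C := fun h ↦ hv (mem_insert_of_mem h)
    by_cases hu : u ∈ A ∪ C
    · rw [insert_eq_of_mem hu]
      exact ih hvC
    · have huv : u ≠ v := fun h ↦ hv (h ▸ mem_insert_self u _)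
      linarith [hexch (A ∪ C) u v huv, ih hvC]

end

theorem stmt_4_general (f : Finset V → ℝ)
    (hmono : ∀ A B : Finset V, A ⊆ B → f A ≤ f B) :
    (∀ A B : Finset V, A ⊆ B → ∀ v ∉ B,
        f (insert v B) - f B ≤ f (insert v A) - f A) ↔
    (∀ U : Finset V, ∀ k : ℕ, 1 ≤ k → submodularityRatio f U k = 1) := by
  constructor
  · intro hsub U k _
    exact (submodularityRatio_eq_one_iff hmono U k).mpr
      fun L _ S _ ↦ sub_le_sum_marginal_of_submodular hsub L S
  · intro hγ
    have hsum : ∀ L S : Finset V, f (L ∪ S) - f L ≤ ∑ v ∈ S, (f (insert v L) - f L) :=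
      fun L S ↦ (submodularityRatio_eq_one_iff hmono L (max 1 S.card)).mp
        (hγ L _ (le_max_left _ _)) L subset_rfl S (le_max_right _ _)
    exact submodular_of_marginal_insert_le
      (fun A _ _ huv ↦ marginal_insert_le_of_sub_le_sum hsum A huv)

/-- a monotone nonnegative set function with f(∅) = 0 is submodular
    iff its submodularity ratio equals 1 for every U and every k ≥ 1. -/
theorem stmt_4 (f : Finset V → ℝ)
    (hmono : ∀ A B : Finset V, A ⊆ B → f A ≤ f B)
    (hempty : f ∅ = 0) (hnonneg : ∀ A, 0 ≤ f A) :
    (∀ A B : Finset V, A ⊆ B → ∀ v ∉ B,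
        f (insert v B) - f B ≤ f (insert v A) - f A) ↔
    (∀ U : Finset V, ∀ k : ℕ, 1 ≤ k → submodularityRatio f U k = 1) :=
  stmt_4_general f hmono
end

section
/- Let a_1, ..., a_m and p_1, ..., p_m be reals with 0 ≤ a_i ≤ p_i ≤ 1 for all i, a_1 = p_1, and ∑_{j=1}^i a_j ≤ 1 for all i ≤ m. Setting h_i = 1 - ∑_{j=1}^i a_j, if m ≤ k and m ≥ 2 then (2k/(k+1)) ∑_{i=1}^m p_i h_{i-1} - ∑_{i=1}^m a_i ≥ 0. -/
/-!
Since `p i ≥ a i` and `h_{i-1} ≥ 0`, it suffices to treat `p = a`. Writing `A = ∑ a_i` and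
`Q = ∑ a_i²`, expanding `A²` shows `∑ a_i h_{i-1} = A - (A² - Q)/2`, and Cauchy–Schwarz gives
`A² ≤ m Q ≤ k Q`. After clearing denominators the remaining gap is `(k - 1) A (1 - A) ≥ 0`.
-/

open Finset

theorem sq_sum_eq_sum_sq_add_two_mul_sum_mul_sum_lt {ι R : Type*} [LinearOrder ι]
    [CommSemiring R] (s : Finset ι) (f : ι → R) :
    (∑ i ∈ s, f i) ^ 2 = ∑ i ∈ s, f i ^ 2 + 2 * ∑ i ∈ s, f i * ∑ j ∈ s with j < i, f j := by
  induction s using Finset.induction_on_max with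
  | empty => simp
  | insert x s hlt ih =>
    have hx : x ∉ s := fun hx => lt_irrefl x (hlt x hx)
    have hbelow : ∑ i ∈ s, f i * ∑ j ∈ insert x s with j < i, f j
        = ∑ i ∈ s, f i * ∑ j ∈ s with j < i, f j :=
      sum_congr rfl fun i hi => by rw [filter_insert, if_neg (hlt i hi).not_gt]
    have htop : {j ∈ insert x s | j < x} = s := by
      rw [filter_insert, if_neg (lt_irrefl x), filter_true_of_mem hlt]
    rw [sum_insert hx, sum_insert hx, sum_insert hx, htop, hbelow]
    calc (f x + ∑ i ∈ s, f i) ^ 2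
        = f x ^ 2 + 2 * (f x * ∑ i ∈ s, f i) + (∑ i ∈ s, f i) ^ 2 := by ring
      _ = _ := by rw [ih]; ring

theorem two_mul_sum_mul_one_sub_sum_lt {ι R : Type*} [LinearOrder ι] [CommRing R]
    (s : Finset ι) (f : ι → R) :
    2 * ∑ i ∈ s, f i * (1 - ∑ j ∈ s with j < i, f j)
      = 2 * ∑ i ∈ s, f i - (∑ i ∈ s, f i) ^ 2 + ∑ i ∈ s, f i ^ 2 := by
  simp only [mul_sub, mul_one, sum_sub_distrib]
  rw [sq_sum_eq_sum_sq_add_two_mul_sum_mul_sum_lt]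
  ring

theorem mul_add_one_le_two_mul_mul {k A Q P : ℝ} (hk : 1 ≤ k) (hA0 : 0 ≤ A) (hA1 : A ≤ 1)
    (hAQ : A ^ 2 ≤ k * Q) (hP : 2 * A - A ^ 2 + Q ≤ 2 * P) :
    A * (k + 1) ≤ 2 * k * P := by
  nlinarith [mul_nonneg (sub_nonneg.2 hk) (mul_nonneg hA0 (sub_nonneg.2 hA1))]

/-- triggering-model key inequality. With 0 ≤ a_i ≤ p_i ≤ 1,
    a_1 = p_1, partial sums of a bounded by 1, h_{i-1} = 1 - ∑_{j<i} a_j,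
    and 2 ≤ m ≤ k, we have (2k/(k+1)) ∑ p_i h_{i-1} - ∑ a_i ≥ 0. -/
theorem stmt_6 (m k : ℕ) (hm : 2 ≤ m) (hmk : m ≤ k)
    (a p : Fin m → ℝ)
    (ha0 : ∀ i, 0 ≤ a i) (hap : ∀ i, a i ≤ p i)
    (hpartial : ∀ i : Fin m, ∑ j ∈ Finset.univ.filter (fun j => j ≤ i), a j ≤ 1) :
    0 ≤ (2 * (k : ℝ) / ((k : ℝ) + 1)) *
        (∑ i, p i * (1 - ∑ j ∈ Finset.univ.filter (fun j => j < i), a j))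
      - ∑ i, a i := by
  have hprefix : ∀ i, ∑ j ∈ univ.filter (fun j => j < i), a j ≤ 1 := fun i =>
    (sum_le_sum_of_subset_of_nonneg (monotone_filter_right _ fun _ _ => le_of_lt)
      fun j _ _ => ha0 j).trans (hpartial i)
  have htotal : ∑ i, a i ≤ 1 := by
    have hall := hpartial ⟨m - 1, by omega⟩
    rwa [filter_true_of_mem fun j _ => Fin.le_def.2 (by omega : j.val ≤ m - 1)] at hall
  have hP : 2 * ∑ i, a i - (∑ i, a i) ^ 2 + ∑ i, a i ^ 2
      ≤ 2 * ∑ i, p i * (1 - ∑ j ∈ univ.filter (fun j => j < i), a j) := by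
    rw [← two_mul_sum_mul_one_sub_sum_lt]
    gcongr with i
    · exact sub_nonneg.2 (hprefix i)
    · exact hap i
  have hCS : (∑ i, a i) ^ 2 ≤ k * ∑ i, a i ^ 2 :=
    (sq_sum_le_card_mul_sum_sq ..).trans (by gcongr; simpa using hmk)
  rw [sub_nonneg, div_mul_eq_mul_div, le_div_iff₀ (by positivity)]
  exact mul_add_one_le_two_mul_mul (by exact_mod_cast (by omega : 1 ≤ k))
    (sum_nonneg fun i _ => ha0 i) htotal hCS hP
end

section
/- Let A be an m×n matrix with unit-norm columns and b ∈ ℝ^m. Define f(S) = ‖b‖² - min_w ‖b - A_S w‖² and suppose λ_max ≥ max over S with |S| ≤ k of the largest eigenvalue of A_S^⊤ A_S, with λ_max > 0. Then for every S with |S| ≤ k: f(S) ≥ (1/λ_max) · ∑_{v∈S} f({v}), i.e., the supermodularity ratio of f at the empty set with parameter k is at least 1/λ_max. -/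
open Finset Matrix

/-- f(S) = ‖b‖² - min over w supported on S of ‖b - A w‖² (squared Euclidean norms). -/
noncomputable def regObj (m n : ℕ) (A : Matrix (Fin m) (Fin n) ℝ) (b : Fin m → ℝ)
    (S : Finset (Fin n)) : ℝ :=
  (∑ i, (b i) ^ 2) -
    sInf {y : ℝ | ∃ w : Fin n → ℝ, (∀ j ∉ S, w j = 0) ∧
      y = ∑ i, (b i - A.mulVec w i) ^ 2}

/-- if λmax > 0 upper-bounds the largest eigenvalue of A_SᵀA_S for
    all |S| ≤ k (expressed via Rayleigh quotients on vectors supported on S),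
    then f(S) ≥ (1/λmax) ∑_{v∈S} f({v}) for every |S| ≤ k. -/
theorem stmt_14 (m n k : ℕ) (A : Matrix (Fin m) (Fin n) ℝ)
    (hunit : ∀ j, ∑ i, (A i j) ^ 2 = 1) (b : Fin m → ℝ)
    (lmax : ℝ) (hpos : 0 < lmax)
    (hray : ∀ S : Finset (Fin n), S.card ≤ k → ∀ w : Fin n → ℝ,
      (∀ j ∉ S, w j = 0) → (∑ i, (A.mulVec w i) ^ 2) ≤ lmax * ∑ j, (w j) ^ 2) :
    ∀ S : Finset (Fin n), S.card ≤ k →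
      (1 / lmax) * ∑ v ∈ S, regObj m n A b {v} ≤ regObj m n A b S := by
  intro S hS
  set c : Fin n → ℝ := fun v => ∑ i, A i v * b i with hc
  set B : ℝ := ∑ i, (b i) ^ 2 with hB
  -- Step 1: regObj {v} ≤ (c v)^2
  have h1 : ∀ v : Fin n, regObj m n A b {v} ≤ (c v) ^ 2 := by
    intro v
    have hne : ({y : ℝ | ∃ w : Fin n → ℝ, (∀ j ∉ ({v} : Finset (Fin n)), w j = 0) ∧
        y = ∑ i, (b i - A.mulVec w i) ^ 2}).Nonempty :=
      ⟨∑ i, (b i - A.mulVec 0 i) ^ 2, 0, fun j _ => rfl, rfl⟩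
    have hlb : ∀ y ∈ {y : ℝ | ∃ w : Fin n → ℝ, (∀ j ∉ ({v} : Finset (Fin n)), w j = 0) ∧
        y = ∑ i, (b i - A.mulVec w i) ^ 2}, B - (c v) ^ 2 ≤ y := by
      rintro y ⟨w, hw, rfl⟩
      have hmv : ∀ i, A.mulVec w i = A i v * w v := by
        intro i
        rw [Matrix.mulVec, dotProduct]
        refine Finset.sum_eq_single v (fun j _ hj => ?_) (by simp)
        rw [hw j (by simp [hj]), mul_zero]
      have hexp : ∑ i, (b i - A.mulVec w i) ^ 2
          = B - 2 * w v * c v + (w v) ^ 2 := by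
        have : ∑ i, (b i - A.mulVec w i) ^ 2
            = ∑ i, ((b i) ^ 2 - 2 * w v * (A i v * b i) + (w v) ^ 2 * (A i v) ^ 2) := by
          refine Finset.sum_congr rfl fun i _ => ?_
          rw [hmv i]; ring
        rw [this, Finset.sum_add_distrib, Finset.sum_sub_distrib, ← Finset.mul_sum,
          ← Finset.mul_sum, hunit v, hc, hB]
        ring
      rw [hexp]
      nlinarith [sq_nonneg (w v - c v)]
    have := le_csInf hne hlb
    unfold regObj
    rw [← hB]
    linarith
  -- Step 2: (1/lmax) * ∑ v in S, (c v)^2 ≤ regObj S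
  have h2 : (1 / lmax) * ∑ v ∈ S, (c v) ^ 2 ≤ regObj m n A b S := by
    set w0 : Fin n → ℝ := fun j => if j ∈ S then c j / lmax else 0 with hw0
    have hsupp : ∀ j ∉ S, w0 j = 0 := fun j hj => by simp [hw0, hj]
    -- cross term
    have E1 : ∑ i, b i * A.mulVec w0 i = ∑ j ∈ S, c j ^ 2 / lmax := by
      have : ∑ i, b i * A.mulVec w0 i = ∑ j, w0 j * c j := by
        simp only [Matrix.mulVec, dotProduct, Finset.mul_sum]
        rw [Finset.sum_comm]
        refine Finset.sum_congr rfl fun j _ => ?_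
        rw [hc, Finset.mul_sum]
        exact Finset.sum_congr rfl fun i _ => by ring
      rw [this, ← Finset.sum_subset (Finset.subset_univ S)
        (fun j _ hj => by rw [hsupp j hj, zero_mul])]
      refine Finset.sum_congr rfl fun j hj => ?_
      simp [hw0, hj]; ring
    have E2 : ∑ i, (A.mulVec w0 i) ^ 2 ≤ (∑ j ∈ S, c j ^ 2) / lmax := by
      have h := hray S hS w0 hsupp
      have : ∑ j, (w0 j) ^ 2 = ∑ j ∈ S, (c j / lmax) ^ 2 := by
        rw [← Finset.sum_subset (Finset.subset_univ S)
          (fun j _ hj => by rw [hsupp j hj]; ring)]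
        exact Finset.sum_congr rfl fun j hj => by simp [hw0, hj]
      rw [this] at h
      calc ∑ i, (A.mulVec w0 i) ^ 2 ≤ lmax * ∑ j ∈ S, (c j / lmax) ^ 2 := h
        _ = (∑ j ∈ S, c j ^ 2) / lmax := by
            rw [Finset.mul_sum, Finset.sum_div]
            refine Finset.sum_congr rfl fun j _ => ?_
            field_simp
    have hval : ∑ i, (b i - A.mulVec w0 i) ^ 2
        ≤ B - (∑ j ∈ S, c j ^ 2) / lmax := by
      have hexp : ∑ i, (b i - A.mulVec w0 i) ^ 2
          = B - 2 * (∑ i, b i * A.mulVec w0 i) + ∑ i, (A.mulVec w0 i) ^ 2 := by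
        calc ∑ i, (b i - A.mulVec w0 i) ^ 2
            = ∑ i, ((b i) ^ 2 - 2 * (b i * A.mulVec w0 i) + (A.mulVec w0 i) ^ 2) :=
              Finset.sum_congr rfl fun i _ => by ring
          _ = B - 2 * (∑ i, b i * A.mulVec w0 i) + ∑ i, (A.mulVec w0 i) ^ 2 := by
              rw [Finset.sum_add_distrib, Finset.sum_sub_distrib, ← Finset.mul_sum, hB]
      rw [hexp, E1, Finset.sum_div]
      linarith [E2, Finset.sum_div S (fun j => c j ^ 2) lmax]
    have hmem : (∑ i, (b i - A.mulVec w0 i) ^ 2) ∈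
        {y : ℝ | ∃ w : Fin n → ℝ, (∀ j ∉ S, w j = 0) ∧
          y = ∑ i, (b i - A.mulVec w i) ^ 2} := ⟨w0, hsupp, rfl⟩
    have hbdd : BddBelow {y : ℝ | ∃ w : Fin n → ℝ, (∀ j ∉ S, w j = 0) ∧
        y = ∑ i, (b i - A.mulVec w i) ^ 2} := by
      refine ⟨0, ?_⟩
      rintro y ⟨w, -, rfl⟩
      exact Finset.sum_nonneg fun i _ => sq_nonneg _
    have hsinf := csInf_le hbdd hmem
    unfold regObj
    rw [← hB]
    have : (1 / lmax) * ∑ v ∈ S, (c v) ^ 2 = (∑ j ∈ S, c j ^ 2) / lmax := by ring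
    linarith
  calc (1 / lmax) * ∑ v ∈ S, regObj m n A b {v}
      ≤ (1 / lmax) * ∑ v ∈ S, (c v) ^ 2 := by
        apply mul_le_mul_of_nonneg_left (Finset.sum_le_sum fun v _ => h1 v)
        positivity
    _ ≤ regObj m n A b S := h2
end
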